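/- For k ≥ 2 and integers m > 1, n with φ_k^{n−1} ≤ m/(φ_k − 1), there exists N such that for all i ≥ N, F_k(n+i+k−1) − (∑_{j=0}^{i} F_k(k−1+j))·m ≤ 0. -/

import Mathlib

/-!
Dividing by `φ ^ (i + 1)`, the expression tends to
`c φ^(k-1) / (φ - 1) * (φ^(n-1) (φ - 1) - m)`, which is negative as soon as the hypothesis on `n`
holds strictly. Equality `φ^(n-1) (φ - 1) = m` is impossible. For `n = 0` the left side is below
`1`. Otherwise, `φ` is irrational (a root of the monic integer polynomial `X^k - ∑ X^j` strictly
between `1` and `2`), so it has a complex conjugate `ψ ≠ φ`, which satisfies the same relation.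
But every root `ψ ≠ φ` of `X^k - ∑ X^j` has `|ψ| < 1`, because `(2 - ψ) ψ^k = 1` while
`(2 - r) r^k ≥ 1` for `1 ≤ r ≤ φ`; hence `|ψ^(n-1) (ψ - 1)| < 2 ≤ m`.
-/

open Finset Filter Topology Polynomial Asymptotics ComplexOrder

theorem pow_mul_geom_sum_lt {r s : ℝ} (hr : 0 < r) (hrs : r < s) {k : ℕ} (hk : 0 < k) :
    r ^ k * ∑ j ∈ range k, s ^ j < s ^ k * ∑ j ∈ range k, r ^ j := by
  rw [mul_sum, mul_sum]
  refine sum_lt_sum_of_nonempty (nonempty_range_iff.2 hk.ne') fun j hj => ?_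
  obtain ⟨d, rfl⟩ := Nat.exists_eq_add_of_lt (mem_range.1 hj)
  have hs : 0 < s := hr.trans hrs
  have hpow : r ^ (d + 1) < s ^ (d + 1) := pow_lt_pow_left₀ hrs hr.le d.succ_ne_zero
  calc r ^ (j + d + 1) * s ^ j = (r ^ (d + 1) * r ^ j) * s ^ j := by ring
    _ < (s ^ (d + 1) * r ^ j) * s ^ j := by gcongr
    _ = s ^ (j + d + 1) * r ^ j := by ring

theorem monic_X_pow_sub_geom_sum (R : Type*) [CommRing R] [Nontrivial R] (k : ℕ) :
    (X ^ k - ∑ j ∈ range k, X ^ j : R[X]).Monic := by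
  refine monic_X_pow_sub ((degree_sum_le _ _).trans_lt ?_)
  refine (Finset.sup_lt_iff (WithBot.bot_lt_coe k)).2 fun j hj => ?_
  rw [degree_X_pow]
  exact WithBot.coe_lt_coe.2 (mem_range.1 hj)

theorem irrational_of_monic_of_aeval_eq_zero {p : ℤ[X]} (hp : p.Monic) {x : ℝ}
    (hx : aeval x p = 0) (hxz : ∀ z : ℤ, x ≠ z) : Irrational x := by
  rintro ⟨q, rfl⟩
  have hq : aeval q p = 0 := by
    apply (algebraMap ℚ ℝ).injective
    rw [← aeval_algebraMap_apply, map_zero]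
    exact hx
  obtain ⟨z, rfl, -⟩ := exists_integer_of_is_root_of_monic hp hq
  exact hxz z (by simp)

theorem Irrational.exists_complex_conjugate {x : ℝ} (hx : Irrational x) (hint : IsIntegral ℚ x) :
    ∃ ψ : ℂ, ψ ≠ x ∧ ∀ p : ℚ[X], aeval x p = 0 → aeval ψ p = 0 := by
  have hintC : IsIntegral ℚ (x : ℂ) := by
    simpa using hint.map (Complex.ofRealAm.restrictScalars ℚ)
  have hsep : IsSeparable ℚ (x : ℂ) := (minpoly.irreducible hintC).separable
  have hnot : (x : ℂ) ∉ (⊥ : Subalgebra ℚ ℂ) := by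
    rintro ⟨q, hq⟩
    exact hx ⟨q, Complex.ofReal_injective (by simpa using hq)⟩
  obtain ⟨ψ, hne, hconj⟩ := (notMem_iff_exists_ne_and_isConjRoot hsep (IsAlgClosed.splits _)).1 hnot
  refine ⟨ψ, hne.symm, fun p hp => ?_⟩
  have hpC : aeval (x : ℂ) p = 0 := by
    rw [← Complex.coe_algebraMap, aeval_algebraMap_apply, hp, map_zero]
  obtain ⟨q, rfl⟩ := minpoly.dvd ℚ (x : ℂ) hpC
  rw [map_mul, hconj.aeval_eq_zero, zero_mul]

theorem tendsto_comp_add_div_pow {u : ℕ → ℝ} {r c : ℝ} (hr : r ≠ 0)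
    (hu : Tendsto (fun j => u j / r ^ j) atTop (𝓝 c)) (p : ℕ) :
    Tendsto (fun j => u (p + j) / r ^ j) atTop (𝓝 (c * r ^ p)) := by
  refine (((tendsto_add_atTop_iff_nat p).2 hu).mul_const (r ^ p)).congr fun j => ?_
  rw [add_comm j p, pow_add]
  field_simp

theorem tendsto_sum_range_div_pow {u : ℕ → ℝ} {r c : ℝ} (hr : 1 < r)
    (hu : Tendsto (fun j => u j / r ^ j) atTop (𝓝 c)) :
    Tendsto (fun i => (∑ j ∈ range i, u j) / r ^ i) atTop (𝓝 (c / (r - 1))) := by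
  have hr0 : 0 < r := one_pos.trans hr
  have hr1 : 0 < r - 1 := sub_pos.2 hr
  have herr : (fun j => u j - c * r ^ j) =o[atTop] fun j => r ^ j := by
    refine (isLittleO_iff_tendsto fun j h => absurd h (pow_ne_zero j hr0.ne')).2 ?_
    refine (tendsto_sub_nhds_zero_iff.2 hu).congr fun j => ?_
    field_simp
  have hgeom_le : ∀ i, ∑ j ∈ range i, r ^ j ≤ r ^ i / (r - 1) := fun i => by
    rw [geom_sum_eq hr.ne', div_le_div_iff_of_pos_right hr1]
    linarith
  have hgeom_top : Tendsto (fun i => ∑ j ∈ range i, r ^ j) atTop atTop := by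
    refine tendsto_atTop_mono (fun i => ?_) tendsto_natCast_atTop_atTop
    simpa using sum_le_sum (s := range i) fun j _ => one_le_pow₀ hr.le (n := j)
  have hsum_err : (fun i => ∑ j ∈ range i, (u j - c * r ^ j)) =o[atTop] fun i => r ^ i := by
    refine (herr.sum_range (fun j => by positivity) hgeom_top).trans_isBigO ?_
    refine IsBigO.of_bound (1 / (r - 1)) (Eventually.of_forall fun i => ?_)
    rw [Real.norm_of_nonneg (by positivity), Real.norm_of_nonneg (by positivity),
      one_div_mul_eq_div]
    exact hgeom_le i
  have hmain : Tendsto (fun i => c / (r - 1) * (1 - (r ^ i)⁻¹)) atTop (𝓝 (c / (r - 1))) := by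
    simpa using (tendsto_inv_atTop_zero.comp (tendsto_pow_atTop_atTop_of_one_lt hr)).const_sub 1
      |>.const_mul (c / (r - 1))
  have h := hsum_err.tendsto_div_nhds_zero.add hmain
  rw [zero_add] at h
  refine h.congr fun i => ?_
  rw [sum_sub_distrib, ← mul_sum, geom_sum_eq hr.ne']
  field_simp
  ring

section KBonacciRoot

variable {k : ℕ} {φ : ℝ}

theorem pow_lt_geom_sum_of_lt (hk : 0 < k) (hroot : ∑ j ∈ range k, φ ^ j = φ ^ k) {r : ℝ}
    (hr : 0 < r) (hrφ : r < φ) : r ^ k < ∑ j ∈ range k, r ^ j := by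
  have h := pow_mul_geom_sum_lt hr hrφ hk
  rw [hroot, mul_comm] at h
  exact lt_of_mul_lt_mul_left h (pow_pos (hr.trans hrφ) k).le

theorem geom_sum_lt_pow_of_lt (hk : 0 < k) (hφ : 0 < φ) (hroot : ∑ j ∈ range k, φ ^ j = φ ^ k)
    {r : ℝ} (hφr : φ < r) : ∑ j ∈ range k, r ^ j < r ^ k := by
  have h := pow_mul_geom_sum_lt hφ hφr hk
  rw [hroot, mul_comm (r ^ k)] at h
  exact lt_of_mul_lt_mul_left h (pow_pos hφ k).le

theorem eq_of_pow_eq_geom_sum (hk : 0 < k) (hφ : 0 < φ) (hroot : ∑ j ∈ range k, φ ^ j = φ ^ k)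
    {r : ℝ} (hr : 0 < r) (h : r ^ k = ∑ j ∈ range k, r ^ j) : r = φ := by
  rcases lt_trichotomy r φ with hlt | heq | hgt
  · exact absurd h (pow_lt_geom_sum_of_lt hk hroot hr hlt).ne
  · exact heq
  · exact absurd h (geom_sum_lt_pow_of_lt hk hφ hroot hgt).ne'

theorem norm_lt_one_of_pow_eq_geom_sum (hk : 0 < k) (hφ : 0 < φ)
    (hroot : ∑ j ∈ range k, φ ^ j = φ ^ k) {ψ : ℂ} (hψ : ψ ^ k = ∑ j ∈ range k, ψ ^ j)
    (hne : ψ ≠ φ) : ‖ψ‖ < 1 := by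
  by_contra! hr1
  set r := ‖ψ‖
  have hrk : 0 < r ^ k := by positivity
  have hsum : r ^ k ≤ ∑ j ∈ range k, r ^ j := by
    calc r ^ k = ‖∑ j ∈ range k, ψ ^ j‖ := by rw [← hψ, norm_pow]
      _ ≤ ∑ j ∈ range k, ‖ψ ^ j‖ := norm_sum_le _ _
      _ = ∑ j ∈ range k, r ^ j := by simp only [norm_pow, r]
  -- multiplying the root equation by `ψ - 1` gives `(2 - ψ) * ψ ^ k = 1`
  have hnorm : ‖2 - ψ‖ * r ^ k = 1 := by
    have h := geom_sum_mul ψ k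
    rw [← hψ] at h
    rw [← norm_pow, ← norm_mul, show (2 - ψ) * ψ ^ k = 1 by linear_combination -h, norm_one]
  have hreal : 1 ≤ (2 - r) * r ^ k := by
    have h := geom_sum_mul r k
    nlinarith
  -- so `‖2 - ψ‖ ≤ 2 - ‖ψ‖ ≤ 2 - re ψ`, which puts `ψ` on the nonnegative real axis
  have hre : r ≤ ψ.re := by
    have h1 : ‖2 - ψ‖ ≤ 2 - r := le_of_mul_le_mul_right (by linarith) hrk
    have h2 : 2 - ψ.re ≤ ‖2 - ψ‖ := by simpa using Complex.re_le_norm (2 - ψ)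
    linarith
  have hψ_nonneg : 0 ≤ ψ := Complex.re_eq_norm.1 (le_antisymm (Complex.re_le_norm ψ) hre)
  have hψ_real : ψ = (ψ.re : ℂ) := (Complex.ext rfl (Complex.nonneg_iff.1 hψ_nonneg).2.symm)
  refine hne (hψ_real.trans (congrArg _ (eq_of_pow_eq_geom_sum hk hφ hroot (by linarith) ?_)))
  exact_mod_cast hψ_real ▸ hψ

theorem irrational_of_pow_eq_geom_sum (hφ : φ ∈ Set.Ioo (1 : ℝ) 2)
    (hroot : ∑ j ∈ range k, φ ^ j = φ ^ k) : Irrational φ := by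
  refine irrational_of_monic_of_aeval_eq_zero (monic_X_pow_sub_geom_sum ℤ k) (by simp [hroot])
    fun z hz => ?_
  have h1 : (1 : ℝ) < z := hz ▸ hφ.1
  have h2 : (z : ℝ) < 2 := hz ▸ hφ.2
  norm_cast at h1 h2
  omega

theorem pow_mul_sub_one_ne_natCast (hk : 0 < k) (hφ : φ ∈ Set.Ioo (1 : ℝ) 2)
    (hroot : ∑ j ∈ range k, φ ^ j = φ ^ k) (n : ℕ) {m : ℕ} (hm : 2 ≤ m) :
    φ ^ n * (φ - 1) ≠ m := by
  intro h
  have hint : IsIntegral ℚ φ :=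
    ⟨X ^ k - ∑ j ∈ range k, X ^ j, monic_X_pow_sub_geom_sum ℚ k, by simp [← aeval_def, hroot]⟩
  obtain ⟨ψ, hne, hconj⟩ := (irrational_of_pow_eq_geom_sum hφ hroot).exists_complex_conjugate hint
  have hψroot : ψ ^ k = ∑ j ∈ range k, ψ ^ j := by
    have := hconj (X ^ k - ∑ j ∈ range k, X ^ j) (by simp [hroot])
    simpa [sub_eq_zero] using this
  have hψm : ψ ^ n * (ψ - 1) = m := by
    have := hconj (X ^ n * (X - 1) - C (m : ℚ)) (by simp [h])
    simpa [sub_eq_zero] using this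
  have hψ := norm_lt_one_of_pow_eq_geom_sum hk (by linarith [hφ.1]) hroot hψroot hne
  have hm' : (2 : ℝ) ≤ m := by exact_mod_cast hm
  have : (m : ℝ) < 2 :=
    calc (m : ℝ) = ‖ψ‖ ^ n * ‖ψ - 1‖ := by rw [← norm_pow, ← norm_mul, hψm, Complex.norm_natCast]
      _ ≤ 1 * (‖ψ‖ + 1) := by
        gcongr
        · exact pow_le_one₀ (norm_nonneg _) hψ.le
        · simpa using norm_sub_le ψ 1
      _ < 2 := by linarith
  linarith

theorem zpow_mul_sub_one_ne_natCast (hk : 0 < k) (hφ : φ ∈ Set.Ioo (1 : ℝ) 2)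
    (hroot : ∑ j ∈ range k, φ ^ j = φ ^ k) (n : ℤ) {m : ℕ} (hm : 2 ≤ m) :
    φ ^ n * (φ - 1) ≠ m := by
  obtain ⟨n, rfl | rfl⟩ := Int.eq_nat_or_neg n
  · simpa using pow_mul_sub_one_ne_natCast hk hφ hroot n hm
  · have hm' : (2 : ℝ) ≤ m := by exact_mod_cast hm
    have hpow : φ ^ (-(n : ℤ)) ≤ 1 := zpow_le_one_of_nonpos₀ hφ.1.le (by omega)
    have hφ1 : 0 < φ - 1 := sub_pos.2 hφ.1
    nlinarith [hφ.2]

end KBonacciRoot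

theorem tendsto_row_sub_div_pow {u : ℕ → ℝ} {φ c : ℝ} (hφ : 1 < φ)
    (hu : Tendsto (fun j => u j / φ ^ j) atTop (𝓝 c)) {k : ℕ} (hk : 2 ≤ k) (n : ℕ) (m : ℝ) :
    Tendsto (fun i => (u (n + i + k - 1) - (∑ j ∈ range (i + 1), u (k - 1 + j)) * m) / φ ^ (i + 1))
      atTop (𝓝 (c * φ ^ (k - 1) / (φ - 1) * (φ ^ ((n : ℤ) - 1) * (φ - 1) - m))) := by
  have hφ0 : φ ≠ 0 := (one_pos.trans hφ).ne'
  have hterm : Tendsto (fun i => u (n + i + k - 1) / φ ^ (i + 1)) atTop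
      (𝓝 (c * φ ^ (n + k - 2))) := by
    refine ((tendsto_add_atTop_iff_nat 1).2
      (tendsto_comp_add_div_pow hφ0 hu (n + k - 2))).congr fun i => ?_
    congr 3
    omega
  have hsum : Tendsto (fun i => (∑ j ∈ range (i + 1), u (k - 1 + j)) / φ ^ (i + 1)) atTop
      (𝓝 (c * φ ^ (k - 1) / (φ - 1))) :=
    (tendsto_add_atTop_iff_nat 1).2
      (tendsto_sum_range_div_pow hφ (tendsto_comp_add_div_pow hφ0 hu (k - 1)))
  have hsplit : φ ^ (n + k - 2) = φ ^ ((n : ℤ) - 1) * φ ^ (k - 1) := by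
    rw [← zpow_natCast, ← zpow_natCast, ← zpow_add₀ hφ0]
    congr 1
    omega
  have hφ1 : φ - 1 ≠ 0 := (sub_pos.2 hφ).ne'
  convert hterm.sub (hsum.mul_const m) using 1
  · ext i
    ring
  · rw [hsplit]
    field_simp

theorem reach_row_n_eventually_nonpos_general (k : ℕ) (hk : 2 ≤ k) (F : ℕ → ℕ)
    (φ : ℝ) (hφ : φ ∈ Set.Ioo (1 : ℝ) 2)
    (hroot : ∑ i ∈ Finset.range k, φ ^ i = φ ^ k)
    (hasymp : ∃ c : ℝ, 0 < c ∧
      Filter.Tendsto (fun j => (F j : ℝ) / φ ^ j) Filter.atTop (nhds c))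
    (m : ℕ) (hm : 1 < m) (n : ℕ) (hn : φ ^ ((n : ℤ) - 1) ≤ (m : ℝ) / (φ - 1)) :
    ∃ N : ℕ, ∀ i, N ≤ i →
      (F (n + i + k - 1) : ℝ) - (∑ j ∈ Finset.range (i + 1), (F (k - 1 + j) : ℝ)) * m ≤ 0 := by
  obtain ⟨c, hc, hF⟩ := hasymp
  have hφ0 : 0 < φ := one_pos.trans hφ.1
  have hφ1 : 0 < φ - 1 := sub_pos.2 hφ.1
  have hlt : φ ^ ((n : ℤ) - 1) * (φ - 1) < m :=
    ((le_div_iff₀ hφ1).1 hn).lt_of_ne (zpow_mul_sub_one_ne_natCast (by omega) hφ hroot _ hm)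
  have hlim : c * φ ^ (k - 1) / (φ - 1) * (φ ^ ((n : ℤ) - 1) * (φ - 1) - m) < 0 :=
    mul_neg_of_pos_of_neg (by positivity) (sub_neg.2 hlt)
  obtain ⟨N, hN⟩ := eventually_atTop.1
    ((tendsto_row_sub_div_pow hφ.1 hF hk n m).eventually (gt_mem_nhds hlim))
  exact ⟨N, fun i hi => (neg_of_div_neg_left (hN i hi) (pow_pos hφ0 _).le).le⟩

/-- For `k ≥ 2` and integers `m > 1`, `n` with `φ_k^{n−1} ≤ m/(φ_k − 1)`, there exists
`N` such that for all `i ≥ N`, `F_k(n+i+k−1) − (∑_{j=0}^{i} F_k(k−1+j))·m ≤ 0`. -/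
theorem reach_row_n_eventually_nonpos (k : ℕ) (hk : 2 ≤ k) (F : ℕ → ℕ)
    (hF0 : ∀ i, i < k - 1 → F i = 0) (hF1 : F (k - 1) = 1)
    (hFrec : ∀ n, F (n + k) = ∑ j ∈ Finset.range k, F (n + j))
    (φ : ℝ) (hφ : φ ∈ Set.Ioo (1 : ℝ) 2)
    (hroot : ∑ i ∈ Finset.range k, φ ^ i = φ ^ k)
    (hasymp : ∃ c : ℝ, 0 < c ∧
      Filter.Tendsto (fun j => (F j : ℝ) / φ ^ j) Filter.atTop (nhds c))
    (m : ℕ) (hm : 1 < m) (n : ℕ) (hn : φ ^ ((n : ℤ) - 1) ≤ (m : ℝ) / (φ - 1)) :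
    ∃ N : ℕ, ∀ i, N ≤ i →
      (F (n + i + k - 1) : ℝ) - (∑ j ∈ Finset.range (i + 1), (F (k - 1 + j) : ℝ)) * m ≤ 0 :=
  reach_row_n_eventually_nonpos_general k hk F φ hφ hroot hasymp m hm n hn
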